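/- arXiv:1610.04880 — 3 statements merged into one kernel-verified Lean document; each statement's English description precedes it below -/
import Mathlib

section
/- Assume the seed covariance satisfies $|\rho(u,v)|\le C(|u|\wedge|v|)$ for all $u,v$ and the trawl satisfies $\sum_{j\ge 1} j|a_j|<\infty$. Then the trawl-process covariances are absolutely summable: $\sum_{k=1}^\infty\big|\sum_{j=0}^\infty\rho(a_j,a_{j+k})\big|<\infty$. -/
/-!
Since `|ρ(u, v)| ≤ C |v|`, the `k`-th covariance is bounded by the tail `C ∑_{j} |a_{j+k+1}|`.
Summing over `k`, the index `n + 1` occurs once for each of the `n + 1` pairs `(k, j)` with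
`k + j = n`, so the double series is dominated by `C ∑ (n + 1) |a_{n+1}| < ∞`.
-/

theorem summable_prod_add_add_one_of_summable_nat_mul {f : ℕ → ℝ} (hf : ∀ n, 0 ≤ f n)
    (h : Summable fun n : ℕ => (n : ℝ) * f n) :
    Summable fun p : ℕ × ℕ => f (p.1 + p.2 + 1) := by
  have hσ : Summable fun x : (Σ n : ℕ, Finset.HasAntidiagonal.antidiagonal n) => f (x.1 + 1) := by
    rw [summable_sigma_of_nonneg fun _ => hf _]
    refine ⟨fun _ => .of_finite, ?_⟩
    simp only [tsum_const, Nat.card_eq_fintype_card, Fintype.card_coe,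
      Finset.Nat.card_antidiagonal, nsmul_eq_mul]
    exact_mod_cast (summable_nat_add_iff 1).2 h
  rw [← Finset.HasAntidiagonal.sigmaAntidiagonalEquivProd.summable_iff]
  refine hσ.congr fun ⟨n, x, hx⟩ => ?_
  rw [Finset.HasAntidiagonal.mem_antidiagonal] at hx
  simp [hx]

theorem trawl_cov_summable_general
    (ρ : ℝ → ℝ → ℝ) (a : ℕ → ℝ) (C : ℝ)
    (hρ : ∀ u v : ℝ, |ρ u v| ≤ C * min |u| |v|)
    (ha : Summable (fun j : ℕ => (j : ℝ) * |a j|)) :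
    Summable (fun k : ℕ => |∑' j : ℕ, ρ (a j) (a (j + (k + 1)))|) := by
  have hC : 0 ≤ C := by simpa using (abs_nonneg _).trans (hρ 1 1)
  have hbound (k j : ℕ) : ‖ρ (a j) (a (j + (k + 1)))‖ ≤ C * |a (k + j + 1)| := by
    rw [Real.norm_eq_abs, show j + (k + 1) = k + j + 1 by ring]
    exact (hρ _ _).trans (mul_le_mul_of_nonneg_left (min_le_right _ _) hC)
  have hmajorant : Summable fun p : ℕ × ℕ => C * |a (p.1 + p.2 + 1)| :=
    (summable_prod_add_add_one_of_summable_nat_mul (fun n => abs_nonneg (a n)) ha).mul_left C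
  refine hmajorant.prod.of_nonneg_of_le (fun k => abs_nonneg _) fun k => ?_
  exact tsum_of_norm_bounded (hmajorant.prod_factor k).hasSum (hbound k)

/-- If the seed covariance satisfies `|ρ(u,v)| ≤ C (|u| ∧ |v|)` and
`∑ j |a_j| < ∞`, then the trawl-process covariances
`Cov(X_0, X_k) = ∑_j ρ(a_j, a_{j+k})` are absolutely summable over `k ≥ 1`. -/
theorem trawl_cov_summable
    (ρ : ℝ → ℝ → ℝ) (a : ℕ → ℝ) (C : ℝ) (hC : 0 < C)
    (hρ : ∀ u v : ℝ, |ρ u v| ≤ C * min |u| |v|)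
    (ha : Summable (fun j : ℕ => (j : ℝ) * |a j|)) :
    Summable (fun k : ℕ => |∑' j : ℕ, ρ (a j) (a (j + (k + 1)))|) :=
  trawl_cov_summable_general ρ a C hρ ha
end

section
/- In the setting of the previous counting process, assume additionally $\mathbb{E}\gamma(v)\mathbf{1}(\tau_1\le u,\tau_2\le v)=o(u)$ as $0\le u\le v\to 0$ and $\mathbb{E}\gamma(v)^2=O(v)$. Then the covariance satisfies $\mathrm{Cov}(\gamma(u),\gamma(v))=(u\wedge v)(1+o(1))$ as $u,v\to 0^+$. -/
/-!
For `u ≤ v`, pathwise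
`1(τ₁ ≤ u) ≤ γ(u)γ(v) ≤ 1(τ₁ ≤ u) + γ(v) 1(τ₁ ≤ u, τ₂ ≤ v) + γ(v)γ(u) 1(τ₂ ≤ u)`,
because `γ(u) = 1` on `{τ₁ ≤ u < τ₂}`. Taking expectations, `E γ(u)γ(v) = P(τ₁ ≤ u) + o(u)`:
the middle term is `o(u)` by assumption, and by Cauchy–Schwarz the last one is at most
`(E γ(v)²)^{1/2} (E γ(u)² 1(τ₂ ≤ u))^{1/2} = O(√v u)`. Since `γ` is integer valued,
`E γ(w) ≤ E γ(w)² = O(w)`, so the product of the means is `O(uv) = o(u)`.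
-/

open Filter Topology MeasureTheory Asymptotics

noncomputable def jumpCount (t : ℕ → ℝ) (u : ℝ) : ℝ :=
  ∑' k : ℕ, if t (k + 1) ≤ u then 1 else 0

section JumpCount

variable {t : ℕ → ℝ} {u v : ℝ}

lemma summable_jumpCount (ht : Tendsto t atTop atTop) (u : ℝ) :
    Summable fun k : ℕ => if t (k + 1) ≤ u then (1 : ℝ) else 0 := by
  obtain ⟨N, hN⟩ := eventually_atTop.mp (ht.eventually_gt_atTop u)
  refine summable_of_ne_finset_zero (s := Finset.range N) fun k hk => if_neg ?_
  exact (hN (k + 1) (by rw [Finset.mem_range] at hk; omega)).not_ge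

lemma jumpCount_nonneg : 0 ≤ jumpCount t u :=
  tsum_nonneg fun _ => by split_ifs <;> norm_num

lemma jumpCount_eq_zero (hmono : Monotone t) (hu : u < t 1) : jumpCount t u = 0 := by
  refine (tsum_congr fun k => if_neg ?_).trans tsum_zero
  exact (hu.trans_le (hmono (show 1 ≤ k + 1 by omega))).not_ge

lemma jumpCount_eq_one (hmono : Monotone t) (h1 : t 1 ≤ u) (h2 : u < t 2) :
    jumpCount t u = 1 := by
  rw [jumpCount, tsum_eq_single 0 fun k hk =>
    if_neg (h2.trans_le (hmono (show 2 ≤ k + 1 by omega))).not_ge]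
  simp [h1]

lemma one_le_jumpCount (ht : Tendsto t atTop atTop) (h : t 1 ≤ u) : 1 ≤ jumpCount t u := by
  simpa [jumpCount, h] using
    (summable_jumpCount ht u).le_tsum 0 fun _ _ => by split_ifs <;> norm_num

lemma jumpCount_le_sq (hmono : Monotone t) (ht : Tendsto t atTop atTop) :
    jumpCount t u ≤ jumpCount t u ^ 2 := by
  rcases lt_or_ge u (t 1) with h | h
  · simp [jumpCount_eq_zero hmono h]
  · nlinarith [one_le_jumpCount ht h]

lemma ite_le_jumpCount_mul (ht : Tendsto t atTop atTop) (huv : u ≤ v) :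
    (if t 1 ≤ u then 1 else 0) ≤ jumpCount t u * jumpCount t v := by
  split_ifs with h
  · exact one_le_mul_of_one_le_of_one_le (one_le_jumpCount ht h)
      (one_le_jumpCount ht (h.trans huv))
  · exact mul_nonneg jumpCount_nonneg jumpCount_nonneg

lemma jumpCount_mul_le (hmono : Monotone t) (huv : u ≤ v) :
    jumpCount t u * jumpCount t v ≤ (if t 1 ≤ u then 1 else 0)
      + jumpCount t v * (if t 1 ≤ u ∧ t 2 ≤ v then 1 else 0)
      + jumpCount t v * (jumpCount t u * if t 2 ≤ u then 1 else 0) := by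
  have hv := jumpCount_nonneg (t := t) (u := v)
  rcases lt_or_ge u (t 1) with h1 | h1
  · rw [jumpCount_eq_zero hmono h1]
    split_ifs <;> nlinarith
  rcases lt_or_ge u (t 2) with h2 | h2
  · rw [jumpCount_eq_one hmono h1 h2]
    rcases lt_or_ge v (t 2) with h2v | h2v
    · rw [jumpCount_eq_one hmono (h1.trans huv) h2v]
      split_ifs <;> norm_num
    · simp [h1, h2v, h2.not_ge]
  · have hu := jumpCount_nonneg (t := t) (u := u)
    simp only [h1, h2, h2.trans huv, and_self, if_true]
    nlinarith [mul_nonneg hu hv]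

end JumpCount

theorem integral_mul_le_sqrt_integral_sq_mul_of_nonneg {α : Type*} [MeasurableSpace α]
    {μ : Measure α} {f g : α → ℝ} (hf_nonneg : 0 ≤ᵐ[μ] f) (hg_nonneg : 0 ≤ᵐ[μ] g) (hf : MemLp f 2 μ)
    (hg : MemLp g 2 μ) :
    ∫ a, f a * g a ∂μ ≤ √((∫ a, f a ^ 2 ∂μ) * ∫ a, g a ^ 2 ∂μ) := by
  have h := integral_mul_le_Lp_mul_Lq_of_nonneg Real.HolderConjugate.two_two hf_nonneg hg_nonneg
    (by simpa using hf) (by simpa using hg)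
  rw [Real.sqrt_mul (integral_nonneg fun a => sq_nonneg (f a)),
    Real.sqrt_eq_rpow, Real.sqrt_eq_rpow]
  simpa only [← Real.rpow_natCast, Nat.cast_ofNat] using h

lemma mul_ite_eq_indicator {Ω : Type*} (f : Ω → ℝ) (p : Ω → Prop) [DecidablePred p] :
    (fun ω => f ω * if p ω then 1 else 0) = {ω | p ω}.indicator f := by
  ext ω
  simp [Set.indicator_apply]

section CountingProcess

variable {Ω : Type*} [MeasurableSpace Ω] {P : Measure Ω}

lemma MeasureTheory.MemLp.mul_ite {q : ENNReal} {f : Ω → ℝ} (hf : MemLp f q P) {p : Ω → Prop}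
    [DecidablePred p] (hp : MeasurableSet {ω | p ω}) :
    MemLp (fun ω => f ω * if p ω then 1 else 0) q P := by
  rw [mul_ite_eq_indicator]
  exact hf.indicator hp

lemma MeasureTheory.Integrable.mul_ite {f : Ω → ℝ} (hf : Integrable f P) {p : Ω → Prop}
    [DecidablePred p] (hp : MeasurableSet {ω | p ω}) :
    Integrable (fun ω => f ω * if p ω then 1 else 0) P := by
  rw [mul_ite_eq_indicator]
  exact hf.indicator hp

variable {τ : ℕ → Ω → ℝ} {γ : ℝ → Ω → ℝ} {u v : ℝ}

lemma measure_le_integral_jumpCount_mul [IsFiniteMeasure P] (hτmeas : ∀ k, Measurable (τ k))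
    (hτ : ∀ᵐ ω ∂P, Monotone (τ · ω) ∧ Tendsto (τ · ω) atTop atTop)
    (hγ : ∀ u ω, γ u ω = jumpCount (τ · ω) u) (hL2 : ∀ u, MemLp (γ u) 2 P) (huv : u ≤ v) :
    (P {ω | τ 1 ω ≤ u}).toReal ≤ ∫ ω, γ u ω * γ v ω ∂P := by
  have hA : MeasurableSet {ω | τ 1 ω ≤ u} := measurableSet_le (hτmeas 1) measurable_const
  rw [← measureReal_def, ← integral_indicator_one hA]
  refine integral_mono_ae ((integrable_const 1).indicator hA) ((hL2 u).integrable_mul (hL2 v)) ?_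
  filter_upwards [hτ] with ω hω
  simpa [Set.indicator_apply, hγ] using ite_le_jumpCount_mul hω.2 huv

lemma integral_jumpCount_mul_le [IsFiniteMeasure P] (hτmeas : ∀ k, Measurable (τ k))
    (hτ : ∀ᵐ ω ∂P, Monotone (τ · ω) ∧ Tendsto (τ · ω) atTop atTop)
    (hγ : ∀ u ω, γ u ω = jumpCount (τ · ω) u) (hL2 : ∀ u, MemLp (γ u) 2 P) (huv : u ≤ v) :
    ∫ ω, γ u ω * γ v ω ∂P ≤ (P {ω | τ 1 ω ≤ u}).toReal
      + ∫ ω, γ v ω * (if τ 1 ω ≤ u ∧ τ 2 ω ≤ v then 1 else 0) ∂P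
      + ∫ ω, γ v ω * (γ u ω * if τ 2 ω ≤ u then 1 else 0) ∂P := by
  have hA : MeasurableSet {ω | τ 1 ω ≤ u} := measurableSet_le (hτmeas 1) measurable_const
  have hAB : MeasurableSet {ω | τ 1 ω ≤ u ∧ τ 2 ω ≤ v} :=
    hA.inter (measurableSet_le (hτmeas 2) measurable_const)
  have hB : MeasurableSet {ω | τ 2 ω ≤ u} := measurableSet_le (hτmeas 2) measurable_const
  have i₁ : Integrable ({ω | τ 1 ω ≤ u}.indicator 1) P := (integrable_const (1 : ℝ)).indicator hA
  have i₂ := ((hL2 v).integrable one_le_two).mul_ite hAB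
  have i₃ : Integrable (fun ω => γ v ω * (γ u ω * if τ 2 ω ≤ u then 1 else 0)) P :=
    (hL2 v).integrable_mul ((hL2 u).mul_ite hB)
  rw [← measureReal_def, ← integral_indicator_one hA, ← integral_add' i₁ i₂,
    ← integral_add' (i₁.add i₂) i₃]
  refine integral_mono_ae ((hL2 u).integrable_mul (hL2 v)) ((i₁.add i₂).add i₃) ?_
  filter_upwards [hτ] with ω hω
  simpa [Set.indicator_apply, hγ] using jumpCount_mul_le hω.1 huv

lemma integral_jumpCount_le_integral_sq [IsFiniteMeasure P]
    (hτ : ∀ᵐ ω ∂P, Monotone (τ · ω) ∧ Tendsto (τ · ω) atTop atTop)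
    (hγ : ∀ u ω, γ u ω = jumpCount (τ · ω) u) (hL2 : MemLp (γ u) 2 P) :
    ∫ ω, γ u ω ∂P ≤ ∫ ω, γ u ω ^ 2 ∂P := by
  refine integral_mono_ae (hL2.integrable one_le_two) hL2.integrable_sq ?_
  filter_upwards [hτ] with ω hω
  simpa [hγ] using jumpCount_le_sq hω.1 hω.2

theorem abs_covariance_sub_measure_le [IsFiniteMeasure P] (hτmeas : ∀ k, Measurable (τ k))
    (hτ : ∀ᵐ ω ∂P, Monotone (τ · ω) ∧ Tendsto (τ · ω) atTop atTop)
    (hγ : ∀ u ω, γ u ω = jumpCount (τ · ω) u) (hL2 : ∀ u, MemLp (γ u) 2 P) (huv : u ≤ v) :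
    |((∫ ω, γ u ω * γ v ω ∂P) - (∫ ω, γ u ω ∂P) * (∫ ω, γ v ω ∂P))
        - (P {ω | τ 1 ω ≤ u}).toReal|
      ≤ ∫ ω, γ v ω * (if τ 1 ω ≤ u ∧ τ 2 ω ≤ v then 1 else 0) ∂P
        + √((∫ ω, γ v ω ^ 2 ∂P) * ∫ ω, γ u ω ^ 2 * (if τ 2 ω ≤ u then 1 else 0) ∂P)
        + (∫ ω, γ u ω ^ 2 ∂P) * ∫ ω, γ v ω ^ 2 ∂P := by
  have hγ_nonneg (w : ℝ) : 0 ≤ γ w := fun ω => hγ w ω ▸ jumpCount_nonneg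
  have hB : MeasurableSet {ω | τ 2 ω ≤ u} := measurableSet_le (hτmeas 2) measurable_const
  have hlow := measure_le_integral_jumpCount_mul hτmeas hτ hγ hL2 huv
  have hup := integral_jumpCount_mul_le hτmeas hτ hγ hL2 huv
  have hcs : ∫ ω, γ v ω * (γ u ω * if τ 2 ω ≤ u then 1 else 0) ∂P
      ≤ √((∫ ω, γ v ω ^ 2 ∂P) * ∫ ω, γ u ω ^ 2 * (if τ 2 ω ≤ u then 1 else 0) ∂P) := by
    convert integral_mul_le_sqrt_integral_sq_mul_of_nonneg (Eventually.of_forall (hγ_nonneg v))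
      (Eventually.of_forall fun ω => mul_nonneg (hγ_nonneg u ω) (by split_ifs <;> norm_num))
      (hL2 v) ((hL2 u).mul_ite hB) using 5 with ω
    split_ifs <;> ring
  have hmean (w : ℝ) : 0 ≤ ∫ ω, γ w ω ∂P ∧ ∫ ω, γ w ω ∂P ≤ ∫ ω, γ w ω ^ 2 ∂P :=
    ⟨integral_nonneg (hγ_nonneg w), integral_jumpCount_le_integral_sq hτ hγ (hL2 w)⟩
  have hprod := mul_le_mul (hmean u).2 (hmean v).2 (hmean v).1 ((hmean u).1.trans (hmean u).2)
  rw [abs_le]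
  constructor <;> nlinarith [mul_nonneg (hmean u).1 (hmean v).1]

theorem abs_covariance_sub_le [IsFiniteMeasure P] (hτmeas : ∀ k, Measurable (τ k))
    (hτ : ∀ᵐ ω ∂P, Monotone (τ · ω) ∧ Tendsto (τ · ω) atTop atTop)
    (hγ : ∀ u ω, γ u ω = jumpCount (τ · ω) u) (hL2 : ∀ u, MemLp (γ u) 2 P) (hu : 0 ≤ u)
    (huv : u ≤ v) {C K : ℝ} (hSu : ∫ ω, γ u ω ^ 2 ∂P ≤ C * u) (hSv : ∫ ω, γ v ω ^ 2 ∂P ≤ C * v)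
    (hQu : ∫ ω, γ u ω ^ 2 * (if τ 2 ω ≤ u then 1 else 0) ∂P ≤ K * u ^ 2) :
    |((∫ ω, γ u ω * γ v ω ∂P) - (∫ ω, γ u ω ∂P) * (∫ ω, γ v ω ∂P)) - u|
      ≤ |(P {ω | τ 1 ω ≤ u}).toReal - u|
        + ∫ ω, γ v ω * (if τ 1 ω ≤ u ∧ τ 2 ω ≤ v then 1 else 0) ∂P
        + (√(C * K * v) + C ^ 2 * v) * u := by
  have hS₀ (w : ℝ) : 0 ≤ ∫ ω, γ w ω ^ 2 ∂P := integral_nonneg fun ω => sq_nonneg _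
  have hQ₀ : 0 ≤ ∫ ω, γ u ω ^ 2 * (if τ 2 ω ≤ u then 1 else 0) ∂P :=
    integral_nonneg fun ω => mul_nonneg (sq_nonneg _) (by split_ifs <;> norm_num)
  have hcs : √((∫ ω, γ v ω ^ 2 ∂P) * ∫ ω, γ u ω ^ 2 * (if τ 2 ω ≤ u then 1 else 0) ∂P)
      ≤ √(C * K * v) * u :=
    calc _ ≤ √(C * K * v * u ^ 2) := Real.sqrt_le_sqrt <|
          (mul_le_mul hSv hQu hQ₀ ((hS₀ v).trans hSv)).trans_eq (by ring)
      _ = √(C * K * v) * u := by rw [Real.sqrt_mul' _ (sq_nonneg u), Real.sqrt_sq hu]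
  have hprod : (∫ ω, γ u ω ^ 2 ∂P) * ∫ ω, γ v ω ^ 2 ∂P ≤ C ^ 2 * v * u :=
    (mul_le_mul hSu hSv (hS₀ v) ((hS₀ u).trans hSu)).trans_eq (by ring)
  have hcov := abs_covariance_sub_measure_le hτmeas hτ hγ hL2 huv
  calc _ ≤ _ := abs_sub_le _ (P {ω | τ 1 ω ≤ u}).toReal _
    _ ≤ _ := by linarith

end CountingProcess

/-- For the unit-jump counting process `γ(u) = ∑_{k≥1} 1(τ_k ≤ u)` with
`P(τ_1 ≤ u) = u(1+o(1))`, `E[γ(u)² 1(τ_2 ≤ u)] = O(u²)`,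
`E[γ(v) 1(τ_1 ≤ u, τ_2 ≤ v)] = o(u)` uniformly for `0 ≤ u ≤ v → 0`, and
`E γ(v)² = O(v)`, the covariance satisfies
`Cov(γ(u),γ(v)) = (u ∧ v)(1+o(1))` as `u, v → 0⁺`. -/
theorem counting_seed_covariance
    {Ω : Type*} [MeasurableSpace Ω] (P : Measure Ω) [IsProbabilityMeasure P]
    (τ : ℕ → Ω → ℝ) (γ : ℝ → Ω → ℝ)
    (hτmeas : ∀ k, Measurable (τ k))
    (hτ : ∀ᵐ ω ∂P, StrictMono (fun k => τ k ω) ∧ 0 < τ 1 ω ∧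
      Tendsto (fun k => τ k ω) atTop atTop)
    (hγ : ∀ u ω, γ u ω = ∑' k : ℕ, if τ (k + 1) ω ≤ u then (1 : ℝ) else 0)
    (hL2 : ∀ u : ℝ, MemLp (γ u) 2 P)
    (h1 : (fun u : ℝ => (P {ω | τ 1 ω ≤ u}).toReal - u) =o[𝓝[>] 0] (fun u => u))
    (h2 : (fun u : ℝ => ∫ ω, (γ u ω) ^ 2 * (if τ 2 ω ≤ u then (1 : ℝ) else 0) ∂P)
      =O[𝓝[>] 0] (fun u => u ^ 2))
    (h3 : ∀ ε > 0, ∃ η > 0, ∀ u v : ℝ, 0 ≤ u → u ≤ v → v < η →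
      |∫ ω, γ v ω * (if τ 1 ω ≤ u ∧ τ 2 ω ≤ v then (1 : ℝ) else 0) ∂P| ≤ ε * u)
    (h4 : ∃ C > 0, ∃ v₀ > 0, ∀ v : ℝ, 0 < v → v ≤ v₀ →
      ∫ ω, (γ v ω) ^ 2 ∂P ≤ C * v) :
    ∀ ε > 0, ∃ η > 0, ∀ u v : ℝ, 0 < u → 0 < v → u < η → v < η →
      |((∫ ω, γ u ω * γ v ω ∂P) - (∫ ω, γ u ω ∂P) * (∫ ω, γ v ω ∂P)) - min u v|
        ≤ ε * min u v := by
  intro ε hε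
  have hτ' : ∀ᵐ ω ∂P, Monotone (τ · ω) ∧ Tendsto (τ · ω) atTop atTop :=
    hτ.mono fun ω h => ⟨h.1.monotone, h.2.2⟩
  obtain ⟨C, -, v₀, hv₀, hsecond⟩ := h4
  obtain ⟨K, hK⟩ := h2.isBigOWith
  obtain ⟨η₃, hη₃, hjoint⟩ := h3 (ε / 4) (by positivity)
  have hrate : Tendsto (fun w => √(C * K * w) + C ^ 2 * w) (𝓝 0) (𝓝 0) :=
    (by fun_prop : Continuous fun w => √(C * K * w) + C ^ 2 * w).tendsto' 0 0 (by simp)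
  have hgood : ∀ᶠ w in 𝓝[>] (0 : ℝ), |(P {ω | τ 1 ω ≤ w}).toReal - w| ≤ ε / 4 * w ∧
      ∫ ω, γ w ω ^ 2 * (if τ 2 ω ≤ w then 1 else 0) ∂P ≤ K * w ^ 2 ∧
      ∫ ω, γ w ω ^ 2 ∂P ≤ C * w ∧ √(C * K * w) + C ^ 2 * w ≤ ε / 2 ∧ w < η₃ := by
    filter_upwards [self_mem_nhdsWithin, h1.def (by positivity : 0 < ε / 4), hK.bound,
      nhdsWithin_le_nhds (eventually_le_nhds hv₀),
      nhdsWithin_le_nhds (hrate.eventually (eventually_le_nhds (by positivity : 0 < ε / 2))),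
      nhdsWithin_le_nhds (Iio_mem_nhds hη₃)] with w (hw : 0 < w) hP hQ hw₀ hsmall hwη
    simp only [Real.norm_eq_abs, abs_of_pos hw, abs_of_nonneg (sq_nonneg w)] at hP hQ
    exact ⟨hP, (le_abs_self _).trans hQ, hsecond w hw hw₀, hsmall, hwη⟩
  obtain ⟨η, hη, hsub⟩ := mem_nhdsGT_iff_exists_Ioo_subset.1 hgood
  refine ⟨η, hη, fun u v hu hv huη hvη => ?_⟩
  wlog huv : u ≤ v generalizing u v
  · simpa only [mul_comm, min_comm] using this v u hv hu hvη huη (le_of_not_ge huv)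
  obtain ⟨hPu, hQu, hSu, -, -⟩ := hsub ⟨hu, huη⟩
  obtain ⟨-, -, hSv, hsmall, hvη₃⟩ := hsub ⟨hv, hvη⟩
  have hjoint' := (le_abs_self _).trans (hjoint u v hu.le huv hvη₃)
  have hcov := abs_covariance_sub_le hτmeas hτ' hγ hL2 hu.le huv hSu hSv hQu
  have hrate_mul := mul_le_mul_of_nonneg_right hsmall hu.le
  rw [min_eq_left huv]
  linarith
end

section
/- Let $\tau_1>0$ be a random variable with $\mathbb{P}(\tau_1\le u)=u(1+o(1))$ as $u\to 0$, and let $a_j>0$ satisfy $a_j\sim c_0 j^{-\alpha}$ with $c_0>0$, $1<\alpha<2$. Then $Z^*=\#\{j\ge 0: a_j\ge \tau_1\}$ has regularly varying tail: $\mathbb{P}(Z^*>y)=c_0 y^{-\alpha}(1+o(1))$ as $y\to\infty$. -/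
/-!
For `t > 0` the number of `j` with `a j ≥ t` is `(c₀ / t) ^ (1 / α) + O(1)`, because
`a j ∼ c₀ j ^ (-α)`; so `Z* > y` holds, up to a null set, between the events
`τ₁ ≤ C₋ (y + O(1)) ^ (-α)` and `τ₁ ≤ C₊ (y - O(1)) ^ (-α)` for any `C₋ < c₀ < C₊`.
Since `P(τ₁ ≤ u) ∼ u` as `u → 0⁺`, both probabilities are `C± y ^ (-α) (1 + o(1))`,
and letting `C± → c₀` gives the claim.
-/

open Filter Topology MeasureTheory Asymptotics

/-- `#{j | t ≤ a j}`; the `tsum` is the junk value `0` when this set is infinite. -/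
noncomputable def countGe (a : ℕ → ℝ) (t : ℝ) : ℝ :=
  ∑' j : ℕ, if t ≤ a j then 1 else 0

section Counting

variable {a : ℕ → ℝ} {t : ℝ}

lemma countGe_le_card {s : Finset ℕ} (hs : ∀ j, t ≤ a j → j ∈ s) :
    countGe a t ≤ s.card := by
  rw [countGe, tsum_eq_sum (s := s) fun j hj => if_neg (mt (hs j) hj), Finset.sum_boole]
  exact_mod_cast Finset.card_filter_le s _

lemma card_le_countGe (ha : Tendsto a atTop (𝓝 0)) (ht : 0 < t) {s : Finset ℕ}
    (hs : ∀ j ∈ s, t ≤ a j) : (s.card : ℝ) ≤ countGe a t := by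
  obtain ⟨N, hN⟩ := eventually_atTop.1 (ha.eventually (gt_mem_nhds ht))
  have hsum : Summable fun j => if t ≤ a j then (1 : ℝ) else 0 :=
    summable_of_ne_finset_zero (s := Finset.range N) fun j hj =>
      if_neg (not_le.2 (hN j (not_lt.1 (Finset.mem_range.not.1 hj))))
  calc (s.card : ℝ) = ∑ j ∈ s, if t ≤ a j then (1 : ℝ) else 0 := by
        rw [Finset.sum_congr rfl fun j hj => if_pos (hs j hj)]; simp
    _ ≤ countGe a t := hsum.sum_le_tsum s fun j _ => by positivity

variable {α C x : ℝ} {J : ℕ}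

lemma countGe_le_of_le_mul_rpow_neg (hα : 0 < α) (hC : 0 < C)
    (haJ : ∀ j, J ≤ j → a j ≤ C * (j : ℝ) ^ (-α)) (hx : 0 < x) (ht : C * x ^ (-α) ≤ t) :
    countGe a t ≤ x + J + 1 := by
  have hle : ∀ j, t ≤ a j → j ∈ Finset.range J ∪ Finset.range (⌊x⌋₊ + 1) := by
    intro j hj
    rw [Finset.mem_union, Finset.mem_range, Finset.mem_range, Nat.lt_succ_iff,
      Nat.le_floor_iff hx.le]
    refine (lt_or_ge j J).imp id fun hJj => ?_
    rcases Nat.eq_zero_or_pos j with rfl | hj0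
    · simpa using hx.le
    have : x ^ (-α) ≤ (j : ℝ) ^ (-α) :=
      le_of_mul_le_mul_left ((ht.trans hj).trans (haJ j hJj)) hC
    exact (Real.rpow_le_rpow_iff_of_neg hx (by exact_mod_cast hj0) (neg_lt_zero.2 hα)).1 this
  calc countGe a t ≤ (Finset.range J ∪ Finset.range (⌊x⌋₊ + 1)).card := countGe_le_card hle
    _ ≤ (J + (⌊x⌋₊ + 1) : ℕ) := by
        exact_mod_cast (Finset.card_union_le _ _).trans (by simp)
    _ ≤ x + J + 1 := by push_cast; linarith [Nat.floor_le hx.le]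

lemma lt_countGe_add_of_mul_rpow_neg_le (ha : Tendsto a atTop (𝓝 0)) (hα : 0 < α) (hC : 0 ≤ C)
    (haJ : ∀ j, J ≤ j → C * (j : ℝ) ^ (-α) ≤ a j) (ht : 0 < t) (htx : t ≤ C * x ^ (-α)) :
    x < countGe a t + J + 1 := by
  have hge : ∀ j ∈ Finset.Ioc J ⌊x⌋₊, t ≤ a j := by
    intro j hj
    obtain ⟨hJj, hjx⟩ := Finset.mem_Ioc.1 hj
    have hj0 : (0 : ℝ) < j := by exact_mod_cast (Nat.zero_le J).trans_lt hJj
    calc t ≤ C * x ^ (-α) := htx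
      _ ≤ C * (j : ℝ) ^ (-α) := mul_le_mul_of_nonneg_left
          (Real.rpow_le_rpow_of_nonpos hj0 ((Nat.le_floor_iff' (by omega)).1 hjx)
            (neg_nonpos.2 hα.le)) hC
      _ ≤ a j := haJ j hJj.le
  have hcard := card_le_countGe ha ht hge
  rw [Nat.card_Ioc] at hcard
  have : (⌊x⌋₊ : ℝ) ≤ ((⌊x⌋₊ - J : ℕ) : ℝ) + J := by exact_mod_cast le_tsub_add
  linarith [Nat.lt_floor_add_one x]

end Counting

lemma tendsto_zero_of_tendsto_mul_rpow {a : ℕ → ℝ} {c α : ℝ} (hα : 0 < α)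
    (ha : Tendsto (fun j : ℕ => a j * (j : ℝ) ^ α) atTop (𝓝 c)) : Tendsto a atTop (𝓝 0) := by
  refine (ha.div_atTop ((tendsto_rpow_atTop hα).comp tendsto_natCast_atTop_atTop)).congr' ?_
  filter_upwards [eventually_ge_atTop 1] with j hj
  have : (0 : ℝ) < (j : ℝ) ^ α := Real.rpow_pos_of_pos (by exact_mod_cast hj) α
  simp [this.ne']

section Bounds

variable {a : ℕ → ℝ} {c α C : ℝ} (ha : Tendsto (fun j : ℕ => a j * (j : ℝ) ^ α) atTop (𝓝 c))
include ha

lemma eventually_mul_rpow_neg_le_of_lt (hC : C < c) :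
    ∀ᶠ j : ℕ in atTop, C * (j : ℝ) ^ (-α) ≤ a j := by
  filter_upwards [ha.eventually_const_lt hC, eventually_ge_atTop 1] with j hj hj1
  have : (0 : ℝ) < (j : ℝ) ^ α := Real.rpow_pos_of_pos (by exact_mod_cast hj1) α
  rw [Real.rpow_neg (Nat.cast_nonneg j), ← div_eq_mul_inv, div_le_iff₀ this]
  exact hj.le

lemma eventually_le_mul_rpow_neg_of_lt (hC : c < C) :
    ∀ᶠ j : ℕ in atTop, a j ≤ C * (j : ℝ) ^ (-α) := by
  filter_upwards [ha.eventually_lt_const hC, eventually_ge_atTop 1] with j hj hj1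
  have : (0 : ℝ) < (j : ℝ) ^ α := Real.rpow_pos_of_pos (by exact_mod_cast hj1) α
  rw [Real.rpow_neg (Nat.cast_nonneg j), ← div_eq_mul_inv, le_div_iff₀ this]
  exact hj.le

end Bounds

lemma tendsto_rpow_mul_rpow_neg_add_atTop (α c : ℝ) :
    Tendsto (fun y : ℝ => y ^ α * (y + c) ^ (-α)) atTop (𝓝 1) := by
  have hlim : Tendsto (fun y : ℝ => 1 + c * y⁻¹) atTop (𝓝 1) := by
    simpa using tendsto_inv_atTop_zero.const_mul c |>.const_add 1
  have hpow : Tendsto (fun y : ℝ => (1 + c * y⁻¹) ^ (-α)) atTop (𝓝 1) := by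
    simpa using hlim.rpow_const (p := -α) (Or.inl one_ne_zero)
  refine hpow.congr' ?_
  filter_upwards [eventually_gt_atTop 0, eventually_gt_atTop (-c)] with y hy hyc
  rw [show 1 + c * y⁻¹ = (y + c) / y by field_simp,
    Real.div_rpow (by linarith) hy.le, Real.rpow_neg hy.le, div_inv_eq_mul, mul_comm]

lemma tendsto_rpow_mul_comp_of_isEquivalent {F : ℝ → ℝ} (hF : F ~[𝓝[>] 0] id)
    {α C : ℝ} (hα : 0 < α) (hC : 0 < C) (c : ℝ) :
    Tendsto (fun y => y ^ α * F (C * (y + c) ^ (-α))) atTop (𝓝 C) := by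
  have hu : Tendsto (fun y : ℝ => C * (y + c) ^ (-α)) atTop (𝓝[>] 0) := by
    have hyc := tendsto_atTop_add_const_right _ c tendsto_id
    refine tendsto_nhdsWithin_iff.2 ⟨?_, ?_⟩
    · simpa using ((tendsto_rpow_neg_atTop hα).comp hyc).const_mul C
    · filter_upwards [hyc.eventually_gt_atTop 0] with y hy
      exact mul_pos hC (Real.rpow_pos_of_pos hy _)
  have hlim : Tendsto (fun y : ℝ => y ^ α * (C * (y + c) ^ (-α))) atTop (𝓝 C) := by
    simpa [mul_left_comm] using (tendsto_rpow_mul_rpow_neg_add_atTop α c).const_mul C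
  exact (IsEquivalent.refl.mul (hF.comp_tendsto hu).symm).tendsto_nhds hlim

section Tail

variable {Ω : Type*} [MeasurableSpace Ω] {P : Measure Ω} [IsFiniteMeasure P] {τ : Ω → ℝ}
  (hτpos : ∀ᵐ ω ∂P, 0 < τ ω) (hF : (fun u => (P {ω | τ ω ≤ u}).toReal) ~[𝓝[>] 0] id)
  {a : ℕ → ℝ} {c α : ℝ} (hα : 0 < α) (ha : Tendsto (fun j : ℕ => a j * (j : ℝ) ^ α) atTop (𝓝 c))
include hτpos hF hα ha

lemma eventually_lt_rpow_mul_measure_lt_countGe (hc : 0 < c) {b : ℝ} (hb : b < c) :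
    ∀ᶠ y in atTop, b < y ^ α * (P {ω | y < countGe a (τ ω)}).toReal := by
  obtain ⟨C, hbC, hCc⟩ := exists_between (max_lt hb hc)
  have hC : 0 < C := (le_max_right _ _).trans_lt hbC
  obtain ⟨J, hJ⟩ := eventually_atTop.1 (eventually_mul_rpow_neg_le_of_lt ha hCc)
  filter_upwards [(tendsto_rpow_mul_comp_of_isEquivalent hF hα hC (J + 1)).eventually_const_lt
    ((le_max_left _ _).trans_lt hbC), eventually_ge_atTop 0] with y hy hy0
  refine hy.trans_le (mul_le_mul_of_nonneg_left (ENNReal.toReal_mono (measure_ne_top _ _)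
    (measure_mono_ae ?_)) (by positivity))
  filter_upwards [hτpos] with ω hω hle
  have := lt_countGe_add_of_mul_rpow_neg_le (tendsto_zero_of_tendsto_mul_rpow hα ha) hα hC.le hJ
    hω hle
  show y < countGe a (τ ω)
  linarith

lemma eventually_rpow_mul_measure_lt_countGe_lt (hc : 0 < c) {b : ℝ} (hb : c < b) :
    ∀ᶠ y in atTop, y ^ α * (P {ω | y < countGe a (τ ω)}).toReal < b := by
  obtain ⟨C, hcC, hCb⟩ := exists_between hb
  have hC : 0 < C := hc.trans hcC
  obtain ⟨J, hJ⟩ := eventually_atTop.1 (eventually_le_mul_rpow_neg_of_lt ha hcC)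
  filter_upwards [(tendsto_rpow_mul_comp_of_isEquivalent hF hα hC (-(J + 1))).eventually_lt_const
      hCb, eventually_gt_atTop ((J : ℝ) + 1)] with y hy hyJ
  refine lt_of_le_of_lt (mul_le_mul_of_nonneg_left (ENNReal.toReal_mono (measure_ne_top _ _)
    (measure_mono_ae ?_)) (Real.rpow_nonneg (by linarith [J.cast_nonneg (α := ℝ)]) α)) hy
  filter_upwards [hτpos] with ω hω hlt
  by_contra hgt
  have := countGe_le_of_le_mul_rpow_neg hα hC hJ (x := y + -(J + 1)) (by linarith)
    (not_le.1 hgt).le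
  exact hlt.not_ge (by linarith)

end Tail

theorem Zstar_regular_tail_general
    {Ω : Type*} [MeasurableSpace Ω] (P : Measure Ω) [IsProbabilityMeasure P]
    (τ : Ω → ℝ) (hτpos : ∀ᵐ ω ∂P, 0 < τ ω)
    (hτ : (fun u : ℝ => (P {ω | τ ω ≤ u}).toReal - u) =o[𝓝[>] 0] (fun u => u))
    (a : ℕ → ℝ) (c₀ α : ℝ) (hc₀ : 0 < c₀)
    (hα : 1 < α)
    (ha : Filter.Tendsto (fun j : ℕ => a j * (j : ℝ) ^ α) atTop (𝓝 c₀)) :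
    Tendsto (fun y : ℝ =>
        y ^ α * (P {ω | (y : ℝ) < ∑' j : ℕ, if τ ω ≤ a j then (1 : ℝ) else 0}).toReal)
      atTop (𝓝 c₀) := by
  have hα0 : 0 < α := by linarith
  exact tendsto_order.2
    ⟨fun _ hb => eventually_lt_rpow_mul_measure_lt_countGe hτpos hτ hα0 ha hc₀ hb,
      fun _ hb => eventually_rpow_mul_measure_lt_countGe_lt hτpos hτ hα0 ha hc₀ hb⟩

/-- Regularly varying tail of `Z* = #{j ≥ 0 : a_j ≥ τ₁}`: if
`P(τ₁ ≤ u) = u(1+o(1))` as `u → 0⁺`, `τ₁ > 0` a.s., and `a_j ∼ c₀ j^{-α}` with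
`c₀ > 0`, `1 < α < 2`, then `P(Z* > y) = c₀ y^{-α}(1+o(1))` as `y → ∞`. -/
theorem Zstar_regular_tail
    {Ω : Type*} [MeasurableSpace Ω] (P : Measure Ω) [IsProbabilityMeasure P]
    (τ : Ω → ℝ) (hτmeas : Measurable τ) (hτpos : ∀ᵐ ω ∂P, 0 < τ ω)
    (hτ : (fun u : ℝ => (P {ω | τ ω ≤ u}).toReal - u) =o[𝓝[>] 0] (fun u => u))
    (a : ℕ → ℝ) (hapos : ∀ j, 0 < a j) (c₀ α : ℝ) (hc₀ : 0 < c₀)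
    (hα : 1 < α) (hα2 : α < 2)
    (ha : Filter.Tendsto (fun j : ℕ => a j * (j : ℝ) ^ α) atTop (𝓝 c₀)) :
    Tendsto (fun y : ℝ =>
        y ^ α * (P {ω | (y : ℝ) < ∑' j : ℕ, if τ ω ≤ a j then (1 : ℝ) else 0}).toReal)
      atTop (𝓝 c₀) :=
  Zstar_regular_tail_general P τ hτpos hτ a c₀ α hc₀ hα ha
end
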